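/- Let m be a probability measure on ℝ^d, let X_1, …, X_N be independent identically distributed ℝ^d-valued random variables with law m on a probability space (Ω, F, P), and let Θ : ℝ^d × ℝ^d → ℝ^p be measurable such that E[‖Θ(X_1, X_2)‖²] ≤ C and E[‖Θ(X_1, X_1)‖²] ≤ C for some constant C ≥ 0. Define Θ̄(x) = ∫ Θ(x,z) dm(z). Then for every i ∈ {1, …, N}: E[ ‖ (1/N) Σ_{j=1}^N Θ(X_i, X_j) − Θ̄(X_i) ‖² ] ≤ 12 C / N. -/

import Mathlib

/-!
Put `Y j = Θ(X i, X j) - Θ̄(X i)`, so that the quantity to bound is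
`N⁻² E‖∑ j, Y j‖² = N⁻² ∑ j k, E⟪Y j, Y k⟫`. If `i`, `j`, `k` are distinct, then `X k` is
independent of `(X i, X j)`, and integrating it out first turns `Y k` into
`Θ̄(X i) - Θ̄(X i) = 0`: the term vanishes. Of the remaining terms (`j = k`, `j = i` or `k = i`)
there are at most `3N`, and each is at most `4C`: `E⟪Y j, Y k⟫ ≤ (E‖Y j‖² + E‖Y k‖²) / 2`,
`E‖Y j‖² ≤ 2 E‖Θ(X i, X j)‖² + 2 E‖Θ̄(X i)‖²`, and Jensen's inequality in the fibre variable gives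
`E‖Θ̄(X i)‖² ≤ E‖Θ(X i, X c)‖² ≤ C` for any `c ≠ i`.
-/

open MeasureTheory ProbabilityTheory Finset
open scoped ENNReal RealInnerProductSpace

section

variable {Ω α β E : Type*} [MeasurableSpace Ω] [MeasurableSpace α] [MeasurableSpace β]
  [NormedAddCommGroup E]

theorem Finset.sum_sum_le_three_mul_card_mul {ι : Type*} [Fintype ι] (a : ι → ι → ℝ) (i : ι)
    {K : ℝ} (hK : 0 ≤ K) (hle : ∀ j k, a j k ≤ K)
    (hzero : ∀ j k, j ≠ i → k ≠ i → j ≠ k → a j k = 0) :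
    ∑ j, ∑ k, a j k ≤ 3 * Fintype.card ι * K := by
  classical
  have hpoint : ∀ j k, a j k ≤
      K * ((if k = j then 1 else 0) + (if j = i then 1 else 0) + (if k = i then 1 else 0)) := by
    intro j k
    by_cases h : j ≠ i ∧ k ≠ i ∧ j ≠ k
    · rw [hzero j k h.1 h.2.1 h.2.2]; positivity
    · have : (1 : ℝ) ≤ (if k = j then 1 else 0) + (if j = i then 1 else 0) +
          (if k = i then 1 else 0) := by
        split_ifs <;> grind
      nlinarith [hle j k]
  calc ∑ j, ∑ k, a j k ≤ ∑ j, ∑ k, K * ((if k = j then 1 else 0) + (if j = i then 1 else 0) +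
        (if k = i then 1 else 0)) := by gcongr with j _ k _; exact hpoint j k
    _ = 3 * Fintype.card ι * K := by
      simp [← mul_sum, sum_add_distrib]
      ring

theorem inv_natCast_smul_sum_sub {V : Type*} [AddCommGroup V] [Module ℝ V] {N : ℕ}
    (hN : (N : ℝ) ≠ 0) (a : Fin N → V) (b : V) :
    (N : ℝ)⁻¹ • ∑ j, a j - b = (N : ℝ)⁻¹ • ∑ j, (a j - b) := by
  rw [sum_sub_distrib, sum_const, card_univ, Fintype.card_fin, smul_sub,
    ← Nat.cast_smul_eq_nsmul ℝ, smul_smul, inv_mul_cancel₀ hN, one_smul]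

theorem memLp_two_and_integral_norm_sq_le_of_lintegral_le {μ : Measure Ω} {Y : Ω → E}
    (hY : AEStronglyMeasurable Y μ) {C : ℝ} (hC : 0 ≤ C)
    (h : ∫⁻ ω, ENNReal.ofReal (‖Y ω‖ ^ 2) ∂μ ≤ ENNReal.ofReal C) :
    MemLp Y 2 μ ∧ ∫ ω, ‖Y ω‖ ^ 2 ∂μ ≤ C := by
  have hY2 : AEStronglyMeasurable (fun ω => ‖Y ω‖ ^ 2) μ := hY.norm.pow 2
  have hnonneg : 0 ≤ᵐ[μ] fun ω => ‖Y ω‖ ^ 2 := .of_forall fun ω => sq_nonneg _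
  have hint : Integrable (fun ω => ‖Y ω‖ ^ 2) μ :=
    ⟨hY2, (hasFiniteIntegral_iff_ofReal hnonneg).2 (h.trans_lt ENNReal.ofReal_lt_top)⟩
  refine ⟨(memLp_two_iff_integrable_sq_norm hY).2 hint, ?_⟩
  rw [integral_eq_lintegral_of_nonneg_ae hnonneg hY2]
  exact ENNReal.toReal_le_of_le_ofReal hC h

theorem MeasureTheory.MeasurePreserving.memLp_comp_iff {μ : Measure Ω} {ν : Measure α}
    {X : Ω → α} (hX : MeasurePreserving X μ ν) {g : α → E} (hg : AEStronglyMeasurable g ν)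
    {p : ℝ≥0∞} : MemLp (fun ω => g (X ω)) p μ ↔ MemLp g p ν := by
  rw [← hX.map_eq] at hg ⊢
  exact (memLp_map_measure_iff hg hX.aemeasurable).symm

theorem ProbabilityTheory.IndepFun.measurePreserving_prodMk {μ : Measure Ω}
    [IsFiniteMeasure μ] {ν : Measure α} {ν' : Measure β} {X : Ω → α} {Y : Ω → β}
    (hXY : IndepFun X Y μ) (hX : MeasurePreserving X μ ν) (hY : MeasurePreserving Y μ ν') :
    MeasurePreserving (fun ω => (X ω, Y ω)) μ (ν.prod ν') :=
  ⟨hX.measurable.prodMk hY.measurable, by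
    rw [(indepFun_iff_map_prod_eq_prod_map_map hX.aemeasurable hY.aemeasurable).1 hXY,
      hX.map_eq, hY.map_eq]⟩

theorem MeasureTheory.MeasurePreserving.integral_comp_of_aestronglyMeasurable {μ : Measure Ω}
    {ν : Measure α} {X : Ω → α} (hX : MeasurePreserving X μ ν) {G : Type*}
    [NormedAddCommGroup G] [NormedSpace ℝ G] {g : α → G} (hg : AEStronglyMeasurable g ν) :
    ∫ ω, g (X ω) ∂μ = ∫ x, g x ∂ν := by
  rw [← hX.map_eq] at hg ⊢
  exact (integral_map hX.aemeasurable hg).symm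

theorem integral_norm_sub_sq_le {μ : Measure Ω} {Y Z : Ω → E} (hY : MemLp Y 2 μ)
    (hZ : MemLp Z 2 μ) :
    ∫ ω, ‖Y ω - Z ω‖ ^ 2 ∂μ ≤ 2 * ∫ ω, ‖Y ω‖ ^ 2 ∂μ + 2 * ∫ ω, ‖Z ω‖ ^ 2 ∂μ := by
  have hY2 := (memLp_two_iff_integrable_sq_norm hY.1).1 hY
  have hZ2 := (memLp_two_iff_integrable_sq_norm hZ.1).1 hZ
  rw [← integral_const_mul, ← integral_const_mul, ← integral_add (hY2.const_mul 2)
    (hZ2.const_mul 2)]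
  refine integral_mono ((memLp_two_iff_integrable_sq_norm (hY.1.sub hZ.1)).1 (hY.sub hZ))
    ((hY2.const_mul 2).add (hZ2.const_mul 2)) fun ω => ?_
  have := norm_sub_le (Y ω) (Z ω)
  have := two_mul_le_add_sq ‖Y ω‖ ‖Z ω‖
  nlinarith [norm_nonneg (Y ω - Z ω)]

section InnerProduct

variable [InnerProductSpace ℝ E]

theorem MeasureTheory.MemLp.integrable_inner {μ : Measure Ω} {Y Z : Ω → E} (hY : MemLp Y 2 μ)
    (hZ : MemLp Z 2 μ) : Integrable (fun ω => ⟪Y ω, Z ω⟫) μ :=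
  (L2.integrable_inner (𝕜 := ℝ) hY.toLp hZ.toLp).congr <| by
    filter_upwards [hY.coeFn_toLp, hZ.coeFn_toLp] with ω hYω hZω
    rw [hYω, hZω]

theorem integral_inner_le_half_add {μ : Measure Ω} {Y Z : Ω → E} (hY : MemLp Y 2 μ)
    (hZ : MemLp Z 2 μ) :
    ∫ ω, ⟪Y ω, Z ω⟫ ∂μ ≤ (∫ ω, ‖Y ω‖ ^ 2 ∂μ + ∫ ω, ‖Z ω‖ ^ 2 ∂μ) / 2 := by
  have hY2 := (memLp_two_iff_integrable_sq_norm hY.1).1 hY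
  have hZ2 := (memLp_two_iff_integrable_sq_norm hZ.1).1 hZ
  rw [← integral_add hY2 hZ2, ← integral_div]
  refine integral_mono (hY.integrable_inner hZ) ((hY2.add hZ2).div_const 2) fun ω => ?_
  have := real_inner_le_norm (Y ω) (Z ω)
  have := two_mul_le_add_sq ‖Y ω‖ ‖Z ω‖
  linarith

theorem integral_norm_sum_sq {ι : Type*} [Fintype ι] {μ : Measure Ω} {Y : ι → Ω → E}
    (hY : ∀ j, MemLp (Y j) 2 μ) :
    ∫ ω, ‖∑ j, Y j ω‖ ^ 2 ∂μ = ∑ j, ∑ k, ∫ ω, ⟪Y j ω, Y k ω⟫ ∂μ := by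
  simp_rw [← real_inner_self_eq_norm_sq, sum_inner, inner_sum]
  rw [integral_finsetSum _ fun j _ => integrable_finsetSum _ fun k _ =>
    (hY j).integrable_inner (hY k)]
  exact sum_congr rfl fun j _ => integral_finsetSum _ fun k _ => (hY j).integrable_inner (hY k)

theorem integral_norm_sum_sq_le {ι : Type*} [Fintype ι] {μ : Measure Ω} {Y : ι → Ω → E}
    (i : ι) {K : ℝ} (hY : ∀ j, MemLp (Y j) 2 μ) (hK : ∀ j, ∫ ω, ‖Y j ω‖ ^ 2 ∂μ ≤ K)
    (horth : ∀ j k, j ≠ i → k ≠ i → j ≠ k → ∫ ω, ⟪Y j ω, Y k ω⟫ ∂μ = 0) :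
    ∫ ω, ‖∑ j, Y j ω‖ ^ 2 ∂μ ≤ 3 * Fintype.card ι * K := by
  rw [integral_norm_sum_sq hY]
  refine sum_sum_le_three_mul_card_mul _ i
    ((integral_nonneg fun ω => sq_nonneg ‖Y i ω‖).trans (hK i)) (fun j k => ?_) horth
  linarith [integral_inner_le_half_add (hY j) (hY k), hK j, hK k]

variable [CompleteSpace E]

theorem norm_integral_sq_le_integral_norm_sq {m : Measure β} [IsProbabilityMeasure m]
    {g : β → E} (hg : MemLp g 2 m) : ‖∫ z, g z ∂m‖ ^ 2 ≤ ∫ z, ‖g z‖ ^ 2 ∂m :=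
  ((convexOn_norm convex_univ).pow (fun _ _ => norm_nonneg _) 2).map_integral_le
    (continuous_norm.pow 2).continuousOn isClosed_univ (.of_forall fun _ => trivial)
    (hg.integrable one_le_two) ((memLp_two_iff_integrable_sq_norm hg.1).1 hg)

section Fiber

variable {ν : Measure α} [SFinite ν] {m : Measure β} [IsProbabilityMeasure m] {Θ : α × β → E}

theorem ae_norm_integral_prod_right_sq_le (hΘ : MemLp Θ 2 (ν.prod m)) :
    ∀ᵐ x ∂ν, ‖∫ z, Θ (x, z) ∂m‖ ^ 2 ≤ ∫ z, ‖Θ (x, z)‖ ^ 2 ∂m := by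
  filter_upwards [((memLp_two_iff_integrable_sq_norm hΘ.1).1 hΘ).prod_right_ae,
    hΘ.1.prodMk_left] with x hx hmeas
  exact norm_integral_sq_le_integral_norm_sq ((memLp_two_iff_integrable_sq_norm hmeas).2 hx)

theorem MeasureTheory.MemLp.integral_prod_right_two (hΘ : MemLp Θ 2 (ν.prod m)) :
    MemLp (fun x => ∫ z, Θ (x, z) ∂m) 2 ν := by
  have hmeas := hΘ.1.integral_prod_right'
  refine (memLp_two_iff_integrable_sq_norm hmeas).2 <|
    ((memLp_two_iff_integrable_sq_norm hΘ.1).1 hΘ).integral_prod_left.mono' (hmeas.norm.pow 2) ?_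
  filter_upwards [ae_norm_integral_prod_right_sq_le hΘ] with x hx
  rwa [Real.norm_of_nonneg (sq_nonneg _)]

theorem integral_norm_integral_prod_right_sq_le (hΘ : MemLp Θ 2 (ν.prod m)) :
    ∫ x, ‖∫ z, Θ (x, z) ∂m‖ ^ 2 ∂ν ≤ ∫ q, ‖Θ q‖ ^ 2 ∂(ν.prod m) := by
  have hΘ2 := (memLp_two_iff_integrable_sq_norm hΘ.1).1 hΘ
  rw [integral_prod _ hΘ2]
  exact integral_mono_of_nonneg (.of_forall fun _ => sq_nonneg _) hΘ2.integral_prod_left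
    (ae_norm_integral_prod_right_sq_le hΘ)

theorem integral_inner_eq_zero_of_integral_prod_right_eq_zero (hΘ : MemLp Θ 2 (ν.prod m))
    (h0 : ∀ x, ∫ z, Θ (x, z) ∂m = 0) :
    ∫ t, ⟪Θ t.1, Θ (t.1.1, t.2)⟫ ∂((ν.prod m).prod m) = 0 := by
  have hmap : MeasurePreserving (Prod.map Prod.fst id : (α × β) × β → α × β)
      ((ν.prod m).prod m) (ν.prod m) := measurePreserving_fst.prod (.id m)
  have hint : Integrable (fun t : (α × β) × β => ⟪Θ t.1, Θ (t.1.1, t.2)⟫) ((ν.prod m).prod m) :=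
    (hΘ.comp_measurePreserving measurePreserving_fst).integrable_inner
      (hΘ.comp_measurePreserving hmap)
  have hfiber : ∀ᵐ x ∂ν, Integrable (fun z => Θ (x, z)) m := by
    filter_upwards [((memLp_two_iff_integrable_sq_norm hΘ.1).1 hΘ).prod_right_ae,
      hΘ.1.prodMk_left] with x hx hmeas
    exact ((memLp_two_iff_integrable_sq_norm hmeas).2 hx).integrable one_le_two
  rw [integral_prod _ hint]
  refine integral_eq_zero_of_ae ?_
  filter_upwards [measurePreserving_fst.quasiMeasurePreserving.ae hfiber] with q hq
  rw [integral_inner hq, h0, inner_zero_right]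
  rfl

end Fiber

theorem integral_norm_sub_integral_prod_right_sq_le {μ : Measure Ω} {ν : Measure α}
    [SFinite ν] {m : Measure β} [IsProbabilityMeasure m] {X : Ω → α}
    (hX : MeasurePreserving X μ ν) {Θ : α × β → E} (hΘ : MemLp Θ 2 (ν.prod m)) {Z : Ω → E}
    (hZ : MemLp Z 2 μ) {C : ℝ} (hΘC : ∫ q, ‖Θ q‖ ^ 2 ∂(ν.prod m) ≤ C)
    (hZC : ∫ ω, ‖Z ω‖ ^ 2 ∂μ ≤ C) :
    ∫ ω, ‖Z ω - ∫ z, Θ (X ω, z) ∂m‖ ^ 2 ∂μ ≤ 4 * C := by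
  have hbar := hΘ.integral_prod_right_two
  calc ∫ ω, ‖Z ω - ∫ z, Θ (X ω, z) ∂m‖ ^ 2 ∂μ
      ≤ 2 * ∫ ω, ‖Z ω‖ ^ 2 ∂μ + 2 * ∫ ω, ‖∫ z, Θ (X ω, z) ∂m‖ ^ 2 ∂μ :=
        integral_norm_sub_sq_le hZ (hbar.comp_measurePreserving hX)
    _ = 2 * ∫ ω, ‖Z ω‖ ^ 2 ∂μ + 2 * ∫ x, ‖∫ z, Θ (x, z) ∂m‖ ^ 2 ∂ν := by
        rw [hX.integral_comp_of_aestronglyMeasurable (g := fun x => ‖∫ z, Θ (x, z) ∂m‖ ^ 2)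
          (hbar.1.norm.pow 2)]
    _ ≤ 4 * C := by linarith [integral_norm_integral_prod_right_sq_le hΘ]

section IID

variable {ι : Type*} {μ : Measure Ω} [IsProbabilityMeasure μ] {m : Measure α} {X : ι → Ω → α}

theorem measurePreserving_prodMk_of_iIndepFun (hX : ∀ i, MeasurePreserving (X i) μ m)
    (hindep : iIndepFun X μ) {i j : ι} (hij : i ≠ j) :
    MeasurePreserving (fun ω => (X i ω, X j ω)) μ (m.prod m) :=
  (hindep.indepFun hij).measurePreserving_prodMk (hX i) (hX j)

theorem measurePreserving_prodMk_prodMk_of_iIndepFun (hX : ∀ i, MeasurePreserving (X i) μ m)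
    (hindep : iIndepFun X μ) {i j k : ι} (hij : i ≠ j) (hik : i ≠ k) (hjk : j ≠ k) :
    MeasurePreserving (fun ω => ((X i ω, X j ω), X k ω)) μ ((m.prod m).prod m) :=
  (hindep.indepFun_prodMk (fun i => (hX i).measurable) i j k hik hjk).measurePreserving_prodMk
    (measurePreserving_prodMk_of_iIndepFun hX hindep hij) (hX k)

theorem integral_inner_comp_eq_zero [IsProbabilityMeasure m]
    (hX : ∀ i, MeasurePreserving (X i) μ m) (hindep : iIndepFun X μ) {f : α × α → E}
    (hf : MemLp f 2 (m.prod m)) (h0 : ∀ x, ∫ z, f (x, z) ∂m = 0) {i j k : ι} (hij : i ≠ j) (hik : i ≠ k) (hjk : j ≠ k) :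
    ∫ ω, ⟪f (X i ω, X j ω), f (X i ω, X k ω)⟫ ∂μ = 0 := by
  have hmap : MeasurePreserving (Prod.map Prod.fst id : (α × α) × α → α × α)
      ((m.prod m).prod m) (m.prod m) := measurePreserving_fst.prod (.id m)
  have hlaw := measurePreserving_prodMk_prodMk_of_iIndepFun hX hindep hij hik hjk
  rw [hlaw.integral_comp_of_aestronglyMeasurable (g := fun t => ⟪f t.1, f (t.1.1, t.2)⟫)
    ((hf.comp_measurePreserving measurePreserving_fst).integrable_inner
      (hf.comp_measurePreserving hmap)).1]
  exact integral_inner_eq_zero_of_integral_prod_right_eq_zero hf h0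

theorem ProbabilityTheory.iIndepFun.memLp_and_integral_norm_sum_centered_sq_le [Fintype ι]
    [IsProbabilityMeasure m] (hindep : iIndepFun X μ) (hX : ∀ i, MeasurePreserving (X i) μ m)
    {Θ : α × α → E} (hΘ : AEStronglyMeasurable Θ (m.prod m)) {C : ℝ}
    (hmom : ∀ a b, MemLp (fun ω => Θ (X a ω, X b ω)) 2 μ ∧ ∫ ω, ‖Θ (X a ω, X b ω)‖ ^ 2 ∂μ ≤ C)
    {i c : ι} (hic : i ≠ c) :
    MemLp (fun ω => ∑ j, (Θ (X i ω, X j ω) - ∫ z, Θ (X i ω, z) ∂m)) 2 μ ∧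
      ∫ ω, ‖∑ j, (Θ (X i ω, X j ω) - ∫ z, Θ (X i ω, z) ∂m)‖ ^ 2 ∂μ ≤
        3 * Fintype.card ι * (4 * C) := by
  have hpair := measurePreserving_prodMk_of_iIndepFun hX hindep hic
  have hΘ2 : MemLp Θ 2 (m.prod m) := (hpair.memLp_comp_iff hΘ).1 (hmom i c).1
  have hΘC : ∫ q, ‖Θ q‖ ^ 2 ∂(m.prod m) ≤ C := by
    rw [← hpair.integral_comp_of_aestronglyMeasurable (g := fun q => ‖Θ q‖ ^ 2) (hΘ.norm.pow 2)]
    exact (hmom i c).2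
  set f := fun q => Θ q - ∫ z, Θ (q.1, z) ∂m
  have hf : MemLp f 2 (m.prod m) :=
    hΘ2.sub (hΘ2.integral_prod_right_two.comp_measurePreserving measurePreserving_fst)
  have hf0 : ∀ x, ∫ z, f (x, z) ∂m = 0 := fun x => by
    simpa only [average_eq_integral] using integral_sub_average m fun z => Θ (x, z)
  have hY : ∀ j, MemLp (fun ω => f (X i ω, X j ω)) 2 μ := fun j =>
    (hmom i j).1.sub (hΘ2.integral_prod_right_two.comp_measurePreserving (hX i))
  refine ⟨memLp_finsetSum _ fun j _ => hY j, integral_norm_sum_sq_le i hY (fun j => ?_)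
    fun j k hji hki hjk => integral_inner_comp_eq_zero hX hindep hf hf0 hji.symm hki.symm hjk⟩
  exact integral_norm_sub_integral_prod_right_sq_le (hX i) hΘ2 (hmom i j).1 hΘC (hmom i j).2

end IID

end InnerProduct
end

/-- Quantitative law-of-large-numbers estimate: if `X_1, …, X_N` are i.i.d. with law `m`,
and the second moments `E[‖Θ(X_i,X_j)‖²]` (both off-diagonal and diagonal) are bounded
by `C`, then for each `i`,
`E[‖(1/N) Σ_j Θ(X_i,X_j) − Θ̄(X_i)‖²] ≤ 12 C / N`, where `Θ̄(x) = ∫ Θ(x,z) dm(z)`. -/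
theorem empirical_average_L2_estimate
    (d p : ℕ) {Ω : Type*} [MeasurableSpace Ω] (μ : Measure Ω) [IsProbabilityMeasure μ]
    (m : Measure (EuclideanSpace ℝ (Fin d))) [IsProbabilityMeasure m]
    (N : ℕ) (hN : 2 ≤ N)
    (X : Fin N → Ω → EuclideanSpace ℝ (Fin d))
    (hX_meas : ∀ i, Measurable (X i))
    (hX_law : ∀ i, μ.map (X i) = m)
    (hX_indep : iIndepFun X μ)
    (Θ : EuclideanSpace ℝ (Fin d) × EuclideanSpace ℝ (Fin d) → EuclideanSpace ℝ (Fin p))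
    (hΘ : Measurable Θ)
    (C : ℝ) (hC : 0 ≤ C)
    (h_cross : ∀ i j : Fin N, i ≠ j →
      ∫⁻ ω, ENNReal.ofReal (‖Θ (X i ω, X j ω)‖ ^ 2) ∂μ ≤ ENNReal.ofReal C)
    (h_diag : ∀ i : Fin N,
      ∫⁻ ω, ENNReal.ofReal (‖Θ (X i ω, X i ω)‖ ^ 2) ∂μ ≤ ENNReal.ofReal C) :
    ∀ i : Fin N,
      ∫⁻ ω, ENNReal.ofReal
          (‖(N : ℝ)⁻¹ • (∑ j : Fin N, Θ (X i ω, X j ω)) - ∫ z, Θ (X i ω, z) ∂m‖ ^ 2) ∂μ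
        ≤ ENNReal.ofReal (12 * C / N) := by
  intro i
  have hX : ∀ j, MeasurePreserving (X j) μ m := fun j => ⟨hX_meas j, hX_law j⟩
  have hmom : ∀ a b, MemLp (fun ω => Θ (X a ω, X b ω)) 2 μ ∧
      ∫ ω, ‖Θ (X a ω, X b ω)‖ ^ 2 ∂μ ≤ C := fun a b =>
    memLp_two_and_integral_norm_sq_le_of_lintegral_le
      (hΘ.comp ((hX_meas a).prodMk (hX_meas b))).aestronglyMeasurable hC <| by
        rcases eq_or_ne a b with rfl | hab
        exacts [h_diag a, h_cross a b hab]
  have : Nontrivial (Fin N) := Fin.nontrivial_iff_two_le.2 hN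
  obtain ⟨c, hic⟩ := exists_ne i
  obtain ⟨hS, hbound⟩ := hX_indep.memLp_and_integral_norm_sum_centered_sq_le hX
    hΘ.aestronglyMeasurable hmom hic.symm
  have hN0 : (N : ℝ) ≠ 0 := by norm_cast; omega
  simp_rw [inv_natCast_smul_sum_sub hN0, norm_smul, mul_pow, norm_inv, RCLike.norm_natCast]
  rw [← ofReal_integral_eq_lintegral_ofReal
    (((memLp_two_iff_integrable_sq_norm hS.1).1 hS).const_mul _)
    (.of_forall fun ω => by positivity), integral_const_mul]
  refine ENNReal.ofReal_le_ofReal ?_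
  calc ((N : ℝ)⁻¹) ^ 2 * ∫ ω, ‖∑ j, (Θ (X i ω, X j ω) - ∫ z, Θ (X i ω, z) ∂m)‖ ^ 2 ∂μ
      ≤ ((N : ℝ)⁻¹) ^ 2 * (3 * N * (4 * C)) := by
        simpa using mul_le_mul_of_nonneg_left hbound (by positivity : (0 : ℝ) ≤ ((N : ℝ)⁻¹) ^ 2)
    _ = 12 * C / N := by field_simp; ring
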